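/- Let M_n be the free metabelian group of rank n ≥ 2 with generating family X = (x_1, …, x_n) given by the images of a free basis. Then pw(M_n, X) ≤ 4n − 1. -/

import Mathlib

/-- The element of `G` represented by a word in the alphabet `X^{±1}`:
a letter `(i, true)` stands for `X i` and `(i, false)` for `(X i)⁻¹`. -/
def evalWord {G : Type*} {n : ℕ} [Group G] (X : Fin n → G) (w : List (Fin n × Bool)) : G :=
  (w.map fun l => if l.2 then X l.1 else (X l.1)⁻¹).prod

/-- `g` is a palindrome with respect to the generating family `X` if it is represented by
some word whose sequence of letters equals its reverse. -/
def IsPalindrome {G : Type*} {n : ℕ} [Group G] (X : Fin n → G) (g : G) : Prop :=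
  ∃ w : List (Fin n × Bool), w.reverse = w ∧ evalWord X w = g

/-- `g` is a product of `k` palindromes with respect to `X`. -/
def IsPalProd {G : Type*} {n : ℕ} [Group G] (X : Fin n → G) (k : ℕ) (g : G) : Prop :=
  ∃ f : Fin k → G, (∀ i, IsPalindrome X (f i)) ∧ (List.ofFn f).prod = g

/-- The palindromic length of `g` with respect to `X`, valued in `ℕ∞`. -/
noncomputable def palLength {G : Type*} {n : ℕ} [Group G] (X : Fin n → G) (g : G) : ℕ∞ :=
  sInf {k : ℕ∞ | ∃ m : ℕ, k = (m : ℕ∞) ∧ IsPalProd X m g}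

/-- The palindromic width of `G` with respect to `X`, valued in `ℕ∞`. -/
noncomputable def palWidth {G : Type*} {n : ℕ} [Group G] (X : Fin n → G) : ℕ∞ :=
  ⨆ g : G, palLength X g

instance (n k : ℕ) : (derivedSeries (FreeGroup (Fin n)) k).Normal :=
  derivedSeries_normal _ _

/-- The free metabelian group `M_n` of rank `n`: the quotient of the free group on `n`
generators by its second derived subgroup. -/
abbrev FreeMetabelian (n : ℕ) :=
  FreeGroup (Fin n) ⧸ derivedSeries (FreeGroup (Fin n)) 2

/-- The images `x_1, …, x_n` of the free basis in `M_n`. -/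
def mGen (n : ℕ) (i : Fin n) : FreeMetabelian n :=
  QuotientGroup.mk (FreeGroup.of i)


/-!
Write `G'` for the derived subgroup, assumed abelian, and `x_i = X i`. Modulo `G'` every `g` is
`∏ x_i ^ k_i`. Moving the powers to the right conjugates each `⁅a_i, x_i⁆` by a prefix `w_i`, and
`w ⁅a, x⁆ w⁻¹ = ⁅w a, x⁆ ⁅w, x⁆⁻¹`, so `g = ∏ ⁅a_i, x_i⁆ x_i ^ k_i` for suitable `a_i` as soon
as every element of `G'` is a product `∏ ⁅b_i, x_i⁆` with arbitrary `b_i ∈ G`. These products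
form a normal subgroup containing all `⁅x_i, x_j⁆`, hence all of `G'`: they are closed under
multiplication, inversion and conjugation up to errors `⁅g, d⁆` with `d ∈ G'`, and such errors
are products `∏ ⁅e_i, x_i⁆` with `e_i ∈ G'`, which multiply exactly because `e ↦ ⁅e, x⁆` is an
endomorphism of `G'`. Each factor `⁅a, x⁆ x ^ k` is a product of three palindromes, so the
palindromic width is at most `3n ≤ 4n - 1`.
-/

open Subgroup
open scoped commutatorElement IsMulCommutative

section Palindromes

variable {G : Type*} [Group G] {n : ℕ} (X : Fin n → G)

theorem evalWord_eq_lift_mk (w : List (Fin n × Bool)) :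
    evalWord X w = FreeGroup.lift X (FreeGroup.mk w) := by
  rw [FreeGroup.lift_mk, evalWord]
  congr 2
  ext ⟨i, b⟩
  cases b <;> rfl

theorem evalWord_append (w₁ w₂ : List (Fin n × Bool)) :
    evalWord X (w₁ ++ w₂) = evalWord X w₁ * evalWord X w₂ := by
  simp [evalWord]

theorem evalWord_invRev (w : List (Fin n × Bool)) :
    evalWord X (FreeGroup.invRev w) = (evalWord X w)⁻¹ := by
  rw [evalWord_eq_lift_mk, evalWord_eq_lift_mk, ← FreeGroup.inv_mk, map_inv]

theorem exists_evalWord_eq (hX : closure (Set.range X) = ⊤) (g : G) :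
    ∃ w, evalWord X w = g := by
  obtain ⟨x, rfl⟩ := FreeGroup.lift_surjective_iff_closure_range_eq_top.mpr hX g
  exact ⟨x.toWord, by rw [evalWord_eq_lift_mk, FreeGroup.mk_toWord]⟩

theorem isPalindrome_one : IsPalindrome X 1 := ⟨[], rfl, rfl⟩

theorem IsPalindrome.inv {p : G} (hp : IsPalindrome X p) : IsPalindrome X p⁻¹ := by
  obtain ⟨w, hw, rfl⟩ := hp
  refine ⟨FreeGroup.invRev w, ?_, evalWord_invRev X w⟩
  conv_rhs => rw [FreeGroup.invRev, ← List.map_reverse, hw]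
  simp [FreeGroup.invRev]

theorem IsPalindrome.evalWord_mul_mul_reverse {p : G} (hp : IsPalindrome X p)
    (w : List (Fin n × Bool)) : IsPalindrome X (evalWord X w * p * evalWord X w.reverse) := by
  obtain ⟨u, hu, rfl⟩ := hp
  exact ⟨w ++ u ++ w.reverse, by simp [hu], by rw [evalWord_append, evalWord_append]⟩

theorem isPalindrome_pow (i : Fin n) (m : ℕ) : IsPalindrome X (X i ^ m) :=
  ⟨List.replicate m (i, true), List.reverse_replicate, by simp [evalWord]⟩

theorem isPalindrome_zpow (i : Fin n) (k : ℤ) : IsPalindrome X (X i ^ k) := by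
  obtain ⟨m, rfl | rfl⟩ := Int.eq_nat_or_neg k
  · simpa using isPalindrome_pow X i m
  · simpa using (isPalindrome_pow X i m).inv

/-- With `a⁺` the value of the reversed word of `a`,
`⁅a, x⁆ x ^ k = (a x a⁺) (a a⁺)⁻¹ x ^ (k - 1)`. -/
theorem isPalProd_three_commutatorElement_mul_zpow (hX : closure (Set.range X) = ⊤) (a : G)
    (i : Fin n) (k : ℤ) : IsPalProd X 3 (⁅a, X i⁆ * X i ^ k) := by
  obtain ⟨w, rfl⟩ := exists_evalWord_eq X hX a
  refine ⟨![evalWord X w * X i * evalWord X w.reverse,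
    (evalWord X w * 1 * evalWord X w.reverse)⁻¹, X i ^ (k - 1)], ?_, ?_⟩
  · intro j
    fin_cases j
    · simpa using (isPalindrome_pow X i 1).evalWord_mul_mul_reverse X w
    · exact ((isPalindrome_one X).evalWord_mul_mul_reverse X w).inv
    · exact isPalindrome_zpow X i (k - 1)
  · simp only [List.ofFn_succ, Matrix.cons_val_zero, Matrix.cons_val_succ, List.ofFn_zero,
      List.prod_cons, List.prod_nil, commutatorElement_def]
    group

theorem isPalProd_one (k : ℕ) : IsPalProd X k 1 :=
  ⟨1, fun _ => isPalindrome_one X, by simp [Pi.one_def]⟩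

theorem IsPalProd.mul {k l : ℕ} {g h : G} (hg : IsPalProd X k g) (hh : IsPalProd X l h) :
    IsPalProd X (k + l) (g * h) := by
  obtain ⟨f, hf, rfl⟩ := hg
  obtain ⟨f', hf', rfl⟩ := hh
  exact ⟨Fin.append f f', Fin.addCases (by simpa) (by simpa), by simp [List.ofFn_fin_append]⟩

theorem IsPalProd.prod_ofFn {k m : ℕ} {g : Fin m → G} (hg : ∀ i, IsPalProd X k (g i)) :
    IsPalProd X (m * k) (List.ofFn g).prod := by
  induction m with
  | zero => simpa using isPalProd_one X 0
  | succ m ih =>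
    rw [List.ofFn_succ, List.prod_cons, Nat.succ_mul, add_comm]
    exact (hg 0).mul X (ih fun i => hg i.succ)

theorem palWidth_le {k : ℕ} (h : ∀ g, IsPalProd X k g) : palWidth X ≤ k :=
  iSup_le fun g => sInf_le ⟨k, rfl, h g⟩

end Palindromes

theorem exists_prod_ofFn_mul_eq_prod_ofFn_conj_mul {G : Type*} [Group G] {m : ℕ}
    (v : Fin m → G) : ∃ w : Fin m → G, ∀ u : Fin m → G,
      (List.ofFn fun i => u i * v i).prod
        = (List.ofFn fun i => w i * u i * (w i)⁻¹).prod * (List.ofFn v).prod := by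
  induction m with
  | zero => exact ⟨1, fun u => by simp⟩
  | succ m ih =>
    obtain ⟨w, hw⟩ := ih fun i => v i.succ
    refine ⟨Fin.cons 1 fun i => v 0 * w i, fun u => ?_⟩
    have hconj : (List.ofFn fun i => v 0 * w i * u i.succ * (v 0 * w i)⁻¹).prod
        = v 0 * (List.ofFn fun i => w i * u i.succ * (w i)⁻¹).prod * (v 0)⁻¹ := by
      rw [← MulAut.conj_apply, map_list_prod, List.map_ofFn]
      simp only [Function.comp_def, MulAut.conj_apply, mul_inv_rev, mul_assoc]
    simp only [List.ofFn_succ, Fin.cons_zero, Fin.cons_succ, List.prod_cons,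
      hw fun i => u i.succ, hconj]
    group

section Metabelian

variable {G : Type*} [Group G]

theorem commutatorElement_mem_commutator (a b : G) : ⁅a, b⁆ ∈ commutator G :=
  commutator_mem_commutator (mem_top a) (mem_top b)

def commutatorOf (a b : G) : commutator G := ⟨⁅a, b⁆, commutatorElement_mem_commutator a b⟩

@[simp]
theorem coe_commutatorOf (a b : G) : (commutatorOf a b : G) = ⁅a, b⁆ := rfl

theorem commutatorOf_mul_left (a a' x : G) : commutatorOf (a * a') x
    = commutatorOf a (commutatorOf a' x) * commutatorOf a' x * commutatorOf a x :=
  Subtype.ext (by simp only [coe_commutatorOf, coe_mul, commutatorElement_def]; group)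

theorem coe_prod_eq_prod_ofFn {n : ℕ} {H : Subgroup G} [IsMulCommutative H] (f : Fin n → H) :
    ((∏ i, f i : H) : G) = (List.ofFn fun i => (f i : G)).prod := by
  rw [← List.prod_ofFn, val_list_prod, List.map_ofFn]
  rfl

theorem commutator_le_of_commutatorElement_mem {n : ℕ} {X : Fin n → G}
    (hX : closure (Set.range X) = ⊤) {N : Subgroup G} [N.Normal]
    (hN : ∀ i j, ⁅X i, X j⁆ ∈ N) : commutator G ≤ N := by
  set π := QuotientGroup.mk' N
  have hgen : closure (Set.range (π ∘ X)) = ⊤ := by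
    rw [Set.range_comp, ← MonoidHom.map_closure, hX,
      map_top_of_surjective π (QuotientGroup.mk'_surjective N)]
  have hcomm : Set.range (π ∘ X) ⊆ centralizer (Set.range (π ∘ X)) := by
    rintro _ ⟨i, rfl⟩ _ ⟨j, rfl⟩
    have h : π ⁅X j, X i⁆ = 1 := (QuotientGroup.eq_one_iff _).mpr (hN j i)
    rwa [map_commutatorElement, commutatorElement_eq_one_iff_mul_comm] at h
  have hcentral : closure (Set.range (π ∘ X)) ≤ centralizer (closure (Set.range (π ∘ X))) := by
    rw [centralizer_closure]
    exact (closure_le _).mpr hcomm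
  rw [hgen] at hcentral
  rw [_root_.commutator_def, commutator_le]
  intro a _ b _
  rw [← QuotientGroup.eq_one_iff, ← QuotientGroup.mk'_apply, map_commutatorElement,
    commutatorElement_eq_one_iff_mul_comm]
  exact hcentral (mem_top (π b)) (π a) (mem_top _)

theorem exists_zpow_mul_mem_commutator {n : ℕ} {X : Fin n → G}
    (hX : closure (Set.range X) = ⊤) (g : G) :
    ∃ k : Fin n → ℤ, g * ((List.ofFn fun i => X i ^ k i).prod)⁻¹ ∈ commutator G := by
  have hgen : closure (Set.range (Abelianization.of ∘ X)) = ⊤ := by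
    rw [Set.range_comp, ← MonoidHom.map_closure, hX,
      map_top_of_surjective _ (QuotientGroup.mk_surjective (s := commutator G))]
  obtain ⟨k, hk⟩ := mem_closure_range_iff_of_fintype.mp (hgen ▸ mem_top (Abelianization.of g))
  refine ⟨k, ?_⟩
  rw [← Abelianization.ker_of, MonoidHom.mem_ker, map_mul, map_inv, map_list_prod,
    List.map_ofFn, List.prod_ofFn, hk]
  simp

variable [IsMulCommutative (commutator G)]

theorem commutatorOf_coe_coe (d e : commutator G) : commutatorOf (d : G) (e : G) = 1 :=
  Subtype.ext (commutatorElement_eq_one_iff_mul_comm.mpr (congrArg Subtype.val (mul_comm d e)))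

variable {n : ℕ} (X : Fin n → G)

def commutatorProd (b : Fin n → G) : commutator G := ∏ i, commutatorOf (b i) (X i)

theorem commutatorProd_one : commutatorProd X 1 = 1 :=
  Finset.prod_eq_one fun i _ => Subtype.ext (commutatorElement_one_left (X i))

theorem commutatorProd_mulSingle (i : Fin n) (a : G) :
    commutatorProd X (Pi.mulSingle i a) = commutatorOf a (X i) := by
  rw [commutatorProd, Fintype.prod_eq_single i fun j hj => ?_, Pi.mulSingle_eq_same]
  rw [Pi.mulSingle_eq_of_ne hj]
  exact Subtype.ext (commutatorElement_one_left (X j))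

theorem commutatorProd_mul (a a' : Fin n → G) :
    commutatorProd X (a * a') = (∏ i, commutatorOf (a i) (commutatorOf (a' i) (X i)))
      * commutatorProd X a' * commutatorProd X a := by
  simp only [commutatorProd, Pi.mul_apply, commutatorOf_mul_left, Finset.prod_mul_distrib]

/-- Its range is `I ⬝ G'`, for `I` the augmentation ideal acting on the `G`-module `G'`. -/
def commutatorProdHom : (Fin n → commutator G) →* commutator G :=
  MonoidHom.mk' (fun e => commutatorProd X fun i => e i) fun e e' => by
    change commutatorProd X ((fun i => (e i : G)) * fun i => (e' i : G)) = _
    rw [commutatorProd_mul, Finset.prod_eq_one fun i _ => commutatorOf_coe_coe _ _, one_mul,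
      mul_comm]

theorem commutatorProdHom_apply (e : Fin n → commutator G) :
    commutatorProdHom X e = commutatorProd X fun i => e i := rfl

theorem exists_commutatorProd_eq_mul_of_mem_range {c : commutator G}
    (hc : c ∈ (commutatorProdHom X).range) (a : Fin n → G) :
    ∃ b, commutatorProd X b = c * commutatorProd X a := by
  obtain ⟨e, rfl⟩ := hc
  refine ⟨(fun i => (e i : G)) * a, ?_⟩
  rw [commutatorProd_mul, Finset.prod_eq_one fun i _ => commutatorOf_coe_coe _ _, one_mul,
    mul_comm, commutatorProdHom_apply]

variable {X}

theorem commutatorOf_mem_range_commutatorProdHom (hX : closure (Set.range X) = ⊤) (g : G)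
    (d : commutator G) : commutatorOf g d ∈ (commutatorProdHom X).range := by
  induction hX.symm ▸ mem_top g using closure_induction generalizing d with
  | mem x hx =>
    obtain ⟨i, rfl⟩ := hx
    refine ⟨(Pi.mulSingle i d)⁻¹, ?_⟩
    have hsingle : (fun j => ((Pi.mulSingle i d : Fin n → commutator G) j : G))
        = Pi.mulSingle i (d : G) := by
      ext j
      by_cases hj : j = i
      · subst hj; simp
      · simp [Pi.mulSingle_eq_of_ne hj]
    rw [map_inv, commutatorProdHom_apply, hsingle, commutatorProd_mulSingle]
    exact Subtype.ext (commutatorElement_inv _ _)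
  | one => exact ⟨1, by rw [map_one]; exact Subtype.ext (commutatorElement_one_left _).symm⟩
  | mul g h _ _ ihg ihh =>
    have hconj : h * d * h⁻¹ ∈ commutator G := Normal.conj_mem inferInstance (d : G) d.2 h
    have hsplit : commutatorOf (g * h) d
        = commutatorOf g (⟨_, hconj⟩ : commutator G) * commutatorOf h d :=
      Subtype.ext (by simp only [coe_commutatorOf, coe_mul, commutatorElement_def]; group)
    rw [hsplit]
    exact mul_mem (ihg _) (ihh d)
  | inv g _ ihg =>
    have hconj : g⁻¹ * d * g⁻¹⁻¹ ∈ commutator G := Normal.conj_mem inferInstance (d : G) d.2 g⁻¹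
    have hsplit : commutatorOf g⁻¹ d = (commutatorOf g (⟨_, hconj⟩ : commutator G))⁻¹ :=
      Subtype.ext (by simp only [coe_commutatorOf, coe_inv, commutatorElement_def]; group)
    rw [hsplit]
    exact inv_mem (ihg _)

theorem exists_commutatorProd_eq_mul (hX : closure (Set.range X) = ⊤) (a a' : Fin n → G) :
    ∃ b, commutatorProd X b = commutatorProd X a * commutatorProd X a' := by
  have hε : (∏ i, commutatorOf (a' i) (commutatorOf (a i) (X i)))⁻¹
      ∈ (commutatorProdHom X).range :=
    inv_mem (prod_mem fun i _ => commutatorOf_mem_range_commutatorProdHom hX _ _)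
  obtain ⟨b, hb⟩ := exists_commutatorProd_eq_mul_of_mem_range X hε (a' * a)
  rw [commutatorProd_mul, mul_assoc, inv_mul_cancel_left] at hb
  exact ⟨b, hb⟩

theorem exists_commutatorProd_eq_inv (hX : closure (Set.range X) = ⊤) (a : Fin n → G) :
    ∃ b, commutatorProd X b = (commutatorProd X a)⁻¹ := by
  obtain ⟨b, hb⟩ := exists_commutatorProd_eq_mul_of_mem_range X (prod_mem fun i _ =>
    commutatorOf_mem_range_commutatorProdHom hX (a⁻¹ i) (commutatorOf (a i) (X i))) a⁻¹
  have h := commutatorProd_mul X a⁻¹ a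
  rw [inv_mul_cancel, commutatorProd_one, mul_right_comm] at h
  exact ⟨b, hb.trans (eq_inv_of_mul_eq_one_left h.symm)⟩

theorem exists_commutatorProd_eq_conj (hX : closure (Set.range X) = ⊤) (g : G)
    (a : Fin n → G) : ∃ b, (commutatorProd X b : G) = g * commutatorProd X a * g⁻¹ := by
  obtain ⟨b, hb⟩ := exists_commutatorProd_eq_mul_of_mem_range X
    (commutatorOf_mem_range_commutatorProdHom hX g (commutatorProd X a)) a
  refine ⟨b, ?_⟩
  rw [hb, coe_mul, coe_commutatorOf, commutatorElement_def]
  group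

theorem commutatorProd_surjective (hX : closure (Set.range X) = ⊤) :
    Function.Surjective (commutatorProd X) := by
  let T : Subgroup G :=
    { carrier := {g | ∃ b, (commutatorProd X b : G) = g}
      mul_mem' := by
        rintro _ _ ⟨a, rfl⟩ ⟨a', rfl⟩
        obtain ⟨b, hb⟩ := exists_commutatorProd_eq_mul hX a a'
        exact ⟨b, by rw [hb, coe_mul]⟩
      one_mem' := ⟨1, by rw [commutatorProd_one, coe_one]⟩
      inv_mem' := by
        rintro _ ⟨a, rfl⟩
        obtain ⟨b, hb⟩ := exists_commutatorProd_eq_inv hX a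
        exact ⟨b, by rw [hb, coe_inv]⟩ }
  have : T.Normal := ⟨by rintro _ ⟨a, rfl⟩ g; exact exists_commutatorProd_eq_conj hX g a⟩
  have hT : commutator G ≤ T := commutator_le_of_commutatorElement_mem hX fun i j =>
    ⟨Pi.mulSingle j (X i), by rw [commutatorProd_mulSingle, coe_commutatorOf]⟩
  intro c
  obtain ⟨b, hb⟩ := hT c.2
  exact ⟨b, Subtype.ext hb⟩

theorem exists_prod_ofFn_conj_commutatorElement_eq (hX : closure (Set.range X) = ⊤)
    (w : Fin n → G) (c : commutator G) :
    ∃ a : Fin n → G, (List.ofFn fun i => w i * ⁅a i, X i⁆ * (w i)⁻¹).prod = c := by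
  obtain ⟨b, hb⟩ := commutatorProd_surjective hX (c * commutatorProd X w)
  refine ⟨fun i => (w i)⁻¹ * b i, ?_⟩
  have hfactor : ∀ i, w i * ⁅(w i)⁻¹ * b i, X i⁆ * (w i)⁻¹
      = ↑(commutatorOf (b i) (X i) * (commutatorOf (w i) (X i))⁻¹) := fun i => by
    simp only [coe_mul, coe_inv, coe_commutatorOf, commutatorElement_def]
    group
  simp only [hfactor, ← coe_prod_eq_prod_ofFn, Finset.prod_mul_distrib, Finset.prod_inv_distrib]
  change ((commutatorProd X b * (commutatorProd X w)⁻¹ : commutator G) : G) = c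
  rw [hb, mul_inv_cancel_right]

theorem exists_prod_ofFn_commutatorElement_mul_zpow_eq (hX : closure (Set.range X) = ⊤)
    (g : G) : ∃ (a : Fin n → G) (k : Fin n → ℤ),
      (List.ofFn fun i => ⁅a i, X i⁆ * X i ^ k i).prod = g := by
  obtain ⟨k, hk⟩ := exists_zpow_mul_mem_commutator hX g
  obtain ⟨w, hw⟩ := exists_prod_ofFn_mul_eq_prod_ofFn_conj_mul fun i => X i ^ k i
  obtain ⟨a, ha⟩ := exists_prod_ofFn_conj_commutatorElement_eq hX w ⟨_, hk⟩
  exact ⟨a, k, by rw [hw, ha, inv_mul_cancel_right]⟩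

theorem palWidth_le_three_mul (hX : closure (Set.range X) = ⊤) : palWidth X ≤ (3 * n : ℕ) :=
  palWidth_le X fun g => by
    obtain ⟨a, k, rfl⟩ := exists_prod_ofFn_commutatorElement_mul_zpow_eq hX g
    rw [mul_comm]
    exact IsPalProd.prod_ofFn X fun i =>
      isPalProd_three_commutatorElement_mul_zpow X hX (a i) i (k i)

end Metabelian

theorem closure_range_mGen (n : ℕ) : closure (Set.range (mGen n)) = ⊤ := by
  rw [show mGen n = QuotientGroup.mk' _ ∘ FreeGroup.of from rfl, Set.range_comp,
    ← MonoidHom.map_closure, FreeGroup.closure_range_of,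
    map_top_of_surjective _ (QuotientGroup.mk'_surjective _)]

instance (n : ℕ) : IsMulCommutative (commutator (FreeMetabelian n)) := by
  rw [← commutator_self_eq_bot_iff, ← derivedSeries_one, ← derivedSeries_succ,
    ← map_derivedSeries_eq (QuotientGroup.mk'_surjective _), eq_bot_iff, map_le_iff_le_comap,
    MonoidHom.comap_bot, QuotientGroup.ker_mk']

theorem pw_freeMetabelian_le_general (n : ℕ) :
    palWidth (mGen n) ≤ ((4 * n - 1 : ℕ) : ℕ∞) :=
  (palWidth_le_three_mul (closure_range_mGen n)).trans (Nat.cast_le.mpr (by omega))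

/-- For `n ≥ 2`, the palindromic width of the free metabelian group of rank `n` is
at most `4n - 1`. -/
theorem pw_freeMetabelian_le (n : ℕ) (hn : 2 ≤ n) :
    palWidth (mGen n) ≤ ((4 * n - 1 : ℕ) : ℕ∞) :=
  pw_freeMetabelian_le_general n
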